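/- arXiv:2406.10055 — 3 statements merged into one kernel-verified Lean document; each statement's English description precedes it below -/
import Mathlib

section
/- Let x₁, x₂, x₃, x₄ be the vertices of a strictly convex quadrilateral in ℝ² (i.e., the four points are in convex position, no three collinear, listed in cyclic order). Suppose there exists an isometry χ of ℝ² with χ(x₁) = x₃, χ(x₂) = x₄, χ(x₃) = x₁, and χ(x₄) = x₂. Then χ is the point reflection through the midpoint of the segment [x₁, x₃]; in particular, the midpoints of [x₁,x₃] and [x₂,x₄] coincide. -/
/-!
An isometry of a real normed space is affine (Mazur–Ulam), so `χ` fixes the midpoints `m₁` of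
`[x₁, x₃]` and `m₂` of `[x₂, x₄]`. Hence `m₂` is equidistant from `x₁` and `x₃`, and `m₁` from
`x₂` and `x₄`: the vector `m₂ - m₁` is orthogonal to both diagonals, and since the diagonals meet,
`m₁ = m₂`. Then `χ` agrees with the point reflection through `m₁` at the non-collinear points
`x₁, x₂, x₃`, which affinely span the plane, so the two isometries coincide.
-/

open RealInnerProductSpace Module

section InnerProductSpace

variable {E : Type*} [NormedAddCommGroup E] [InnerProductSpace ℝ E]

theorem inner_eq_of_mem_segment {x y p w : E} (h : ⟪w, y - x⟫ = 0)
    (hp : p ∈ segment ℝ x y) : ⟪w, p⟫ = ⟪w, x⟫ := by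
  obtain ⟨a, b, -, -, hab, rfl⟩ := hp
  rw [inner_sub_right, sub_eq_zero] at h
  rw [inner_add_right, real_inner_smul_right, real_inner_smul_right, h]
  linear_combination ⟪w, x⟫ * hab

/-- `⟪m₂ - m₁, ·⟫` is constant on each diagonal; comparing the two constants at a common point
gives `‖m₂ - m₁‖² = 0`. -/
theorem midpoint_eq_midpoint_of_dist_eq {x₁ x₂ x₃ x₄ : E}
    (h₁₃ : dist x₁ (midpoint ℝ x₂ x₄) = dist x₃ (midpoint ℝ x₂ x₄))
    (h₂₄ : dist x₂ (midpoint ℝ x₁ x₃) = dist x₄ (midpoint ℝ x₁ x₃))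
    (hcyc : (segment ℝ x₁ x₃ ∩ segment ℝ x₂ x₄).Nonempty) :
    midpoint ℝ x₁ x₃ = midpoint ℝ x₂ x₄ := by
  set m₁ := midpoint ℝ x₁ x₃
  set m₂ := midpoint ℝ x₂ x₄
  obtain ⟨p, hp₁₃, hp₂₄⟩ := hcyc
  have ho₁₃ : ⟪m₂ - m₁, x₃ - x₁⟫ = 0 :=
    EuclideanGeometry.inner_vsub_vsub_of_dist_eq_of_dist_eq
      (dist_left_midpoint_eq_dist_right_midpoint (𝕜 := ℝ) x₁ x₃) h₁₃
  have ho₂₄ : ⟪m₂ - m₁, x₄ - x₂⟫ = 0 :=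
    EuclideanGeometry.inner_vsub_vsub_of_dist_eq_of_dist_eq h₂₄
      (dist_left_midpoint_eq_dist_right_midpoint (𝕜 := ℝ) x₂ x₄)
  have hp₁ : ⟪m₂ - m₁, p⟫ = ⟪m₂ - m₁, m₁⟫ := by
    rw [inner_eq_of_mem_segment ho₁₃ hp₁₃,
      inner_eq_of_mem_segment ho₁₃ (midpoint_mem_segment x₁ x₃)]
  have hp₂ : ⟪m₂ - m₁, p⟫ = ⟪m₂ - m₁, m₂⟫ := by
    rw [inner_eq_of_mem_segment ho₂₄ hp₂₄,
      inner_eq_of_mem_segment ho₂₄ (midpoint_mem_segment x₂ x₄)]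
  have hw : ⟪m₂ - m₁, m₂ - m₁⟫ = 0 := by rw [inner_sub_right, ← hp₁, ← hp₂, sub_self]
  exact (sub_eq_zero.mp (inner_self_eq_zero.mp hw)).symm

end InnerProductSpace

theorem not_collinear_of_notMem_segment {k V : Type*} [Field k] [LinearOrder k]
    [IsStrictOrderedRing k] [AddCommGroup V] [Module k V] {x y z : V} (hx : x ∉ segment k y z)
    (hy : y ∉ segment k x z) (hz : z ∉ segment k x y) : ¬ Collinear k ({x, y, z} : Set V) := by
  intro h
  rcases h.wbtw_or_wbtw_or_wbtw with h | h | h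
  · exact hy h.mem_segment
  · exact hz (segment_symm k y x ▸ h.mem_segment)
  · exact hx (segment_symm k z y ▸ h.mem_segment)

theorem affineSpan_eq_top_of_not_collinear {k V P : Type*} [Field k] [AddCommGroup V] [Module k V]
    [AddTorsor V P] [FiniteDimensional k V] (hV : finrank k V = 2)
    {p₁ p₂ p₃ : P} (h : ¬ Collinear k ({p₁, p₂, p₃} : Set P)) :
    affineSpan k ({p₁, p₂, p₃} : Set P) = ⊤ := by
  have hind := affineIndependent_iff_not_collinear_set.mpr h
  have := hind.affineSpan_eq_top_iff_card_eq_finrank_add_one.mpr (by simp [hV])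
  rwa [Matrix.range_cons, Matrix.range_cons, Matrix.range_cons, Matrix.range_empty,
    Set.union_empty, Set.singleton_union, Set.singleton_union] at this

theorem IsometryEquiv.ext_on {E F : Type*} [NormedAddCommGroup E] [NormedSpace ℝ E]
    [NormedAddCommGroup F] [NormedSpace ℝ F] {s : Set E} (h_span : affineSpan ℝ s = ⊤)
    {f g : E ≃ᵢ F} (h_agree : s.EqOn f g) : f = g := by
  have := AffineMap.ext_on h_span (f := f.toRealAffineIsometryEquiv.toAffineMap)
    (g := g.toRealAffineIsometryEquiv.toAffineMap) (by simpa using h_agree)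
  ext x
  simpa using congr($this x)

theorem stmt_2_general (x₁ x₂ x₃ x₄ : EuclideanSpace ℝ (Fin 2))
    -- the four points are in strictly convex position: each is outside the convex hull
    -- of the other three
    (hextr₁ : x₁ ∉ convexHull ℝ {x₂, x₃, x₄})
    (hextr₂ : x₂ ∉ convexHull ℝ {x₁, x₃, x₄})
    (hextr₃ : x₃ ∉ convexHull ℝ {x₁, x₂, x₄})
    -- listed in cyclic order: the diagonals [x₁,x₃] and [x₂,x₄] meet
    (hcyc : (segment ℝ x₁ x₃ ∩ segment ℝ x₂ x₄).Nonempty)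
    (χ : EuclideanSpace ℝ (Fin 2) ≃ᵢ EuclideanSpace ℝ (Fin 2))
    (h₁ : χ x₁ = x₃) (h₂ : χ x₂ = x₄) (h₃ : χ x₃ = x₁) (h₄ : χ x₄ = x₂) :
    (∀ x, χ x = (2 : ℝ) • midpoint ℝ x₁ x₃ - x) ∧
      midpoint ℝ x₁ x₃ = midpoint ℝ x₂ x₄ := by
  have hfix₁ : χ (midpoint ℝ x₁ x₃) = midpoint ℝ x₁ x₃ := by
    rw [χ.map_midpoint, h₁, h₃, midpoint_comm]
  have hfix₂ : χ (midpoint ℝ x₂ x₄) = midpoint ℝ x₂ x₄ := by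
    rw [χ.map_midpoint, h₂, h₄, midpoint_comm]
  have hm : midpoint ℝ x₁ x₃ = midpoint ℝ x₂ x₄ := by
    refine midpoint_eq_midpoint_of_dist_eq ?_ ?_ hcyc
    · rw [← χ.dist_eq, h₁, hfix₂]
    · rw [← χ.dist_eq, h₂, hfix₁]
  have hplane : affineSpan ℝ {x₁, x₂, x₃} = ⊤ :=
    affineSpan_eq_top_of_not_collinear finrank_euclideanSpace_fin <|
      not_collinear_of_notMem_segment
        (fun h => hextr₁ (segment_subset_convexHull (by simp) (by simp) h))
        (fun h => hextr₂ (segment_subset_convexHull (by simp) (by simp) h))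
        (fun h => hextr₃ (segment_subset_convexHull (by simp) (by simp) h))
  have hχ : χ = (AffineIsometryEquiv.pointReflection ℝ (midpoint ℝ x₁ x₃)).toIsometryEquiv := by
    refine IsometryEquiv.ext_on hplane ?_
    rintro x (rfl | rfl | rfl)
    · simp [h₁]
    · simp [h₂, hm]
    · simp [h₃]
  refine ⟨fun x => ?_, hm⟩
  rw [hχ, AffineIsometryEquiv.coe_toIsometryEquiv, AffineIsometryEquiv.pointReflection_apply,
    vsub_eq_sub, vadd_eq_add, two_smul]
  abel

/-- A combinatorial central symmetry of a strictly convex quadrilateral is the point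
reflection through the midpoint of a diagonal; in particular the two diagonals have
the same midpoint. -/
theorem stmt_2 (x₁ x₂ x₃ x₄ : EuclideanSpace ℝ (Fin 2))
    -- the four points are in strictly convex position: each is outside the convex hull
    -- of the other three
    (hextr₁ : x₁ ∉ convexHull ℝ {x₂, x₃, x₄})
    (hextr₂ : x₂ ∉ convexHull ℝ {x₁, x₃, x₄})
    (hextr₃ : x₃ ∉ convexHull ℝ {x₁, x₂, x₄})
    (hextr₄ : x₄ ∉ convexHull ℝ {x₁, x₂, x₃})
    -- listed in cyclic order: the diagonals [x₁,x₃] and [x₂,x₄] meet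
    (hcyc : (segment ℝ x₁ x₃ ∩ segment ℝ x₂ x₄).Nonempty)
    (χ : EuclideanSpace ℝ (Fin 2) ≃ᵢ EuclideanSpace ℝ (Fin 2))
    (h₁ : χ x₁ = x₃) (h₂ : χ x₂ = x₄) (h₃ : χ x₃ = x₁) (h₄ : χ x₄ = x₂) :
    (∀ x, χ x = (2 : ℝ) • midpoint ℝ x₁ x₃ - x) ∧
      midpoint ℝ x₁ x₃ = midpoint ℝ x₂ x₄ :=
  stmt_2_general x₁ x₂ x₃ x₄ hextr₁ hextr₂ hextr₃ hcyc χ h₁ h₂ h₃ h₄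
end

section
/- Let r, s > 0 and Ψ ∈ (0, π). Define cosh ε = cosh r · cosh s − sinh r · sinh s · cos Ψ (hyperbolic law of cosines) and sin Φ = sinh s · sin Ψ / sinh ε (hyperbolic law of sines). Define the corresponding Euclidean quantities with sides r' = tanh r, s' = tanh s and the same angle Ψ: (ε')² = r'² + s'² − 2 r' s' cos Ψ and sin Φ' = s' · sin Ψ / ε'. Then tan Φ' = tan Φ · cosh r. -/
open Real

/-!
Both angles are read off from their sines and from a splitting of the squared opposite side
into the squares of two legs: `sinh² ε = (sinh s sin Ψ)² + A²` with
`A = sinh r cosh s - cosh r sinh s cos Ψ`, and `ε'² = (tanh s sin Ψ)² + B²` with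
`B = tanh r - tanh s cos Ψ`. Hence `tan Φ = sinh s sin Ψ / |A|` and
`tan Φ' = tanh s sin Ψ / |B|`, and the theorem follows from `A = B cosh r cosh s`.
-/

theorem Real.tan_eq_div_abs_of_sin_eq_div {Φ d p q : ℝ} (hcos : 0 < cos Φ) (hd : 0 < d)
    (hsin : sin Φ = p / d) (hd_sq : d ^ 2 = p ^ 2 + q ^ 2) : tan Φ = p / |q| := by
  have hcos_sq : cos Φ ^ 2 = (|q| / d) ^ 2 := by
    rw [cos_sq', hsin, div_pow, div_pow, sq_abs]
    field_simp
    linarith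
  have hcos_eq : cos Φ = |q| / d :=
    (pow_left_inj₀ hcos.le (by positivity) two_ne_zero).1 hcos_sq
  have hq : |q| ≠ 0 := by
    intro hq
    rw [hq, zero_div] at hcos_eq
    exact hcos.ne' hcos_eq
  rw [tan_eq_sin_div_cos, hsin, hcos_eq]
  field_simp

theorem Real.sinh_sq_of_cosh_eq_hyperbolic_law_of_cosines {r s Ψ ε : ℝ}
    (hcos : cosh ε = cosh r * cosh s - sinh r * sinh s * cos Ψ) :
    sinh ε ^ 2 = (sinh s * sin Ψ) ^ 2 + (sinh r * cosh s - cosh r * sinh s * cos Ψ) ^ 2 := by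
  linear_combination (-1) * cosh_sq_sub_sinh_sq ε
    + (cosh ε + cosh r * cosh s - sinh r * sinh s * cos Ψ) * hcos
    + (cosh s ^ 2 - sinh s ^ 2 * cos Ψ ^ 2) * cosh_sq_sub_sinh_sq r + cosh_sq_sub_sinh_sq s
    - sinh s ^ 2 * sin_sq_add_cos_sq Ψ

theorem sq_eq_of_law_of_cosines {a b Ψ c : ℝ} (hc : c ^ 2 = a ^ 2 + b ^ 2 - 2 * a * b * cos Ψ) :
    c ^ 2 = (b * sin Ψ) ^ 2 + (a - b * cos Ψ) ^ 2 := by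
  linear_combination hc - b ^ 2 * sin_sq_add_cos_sq Ψ

theorem Real.sinh_mul_cosh_sub_eq_tanh_sub_mul (r s x : ℝ) :
    sinh r * cosh s - cosh r * sinh s * x = (tanh r - tanh s * x) * (cosh r * cosh s) := by
  rw [tanh_eq_sinh_div_cosh, tanh_eq_sinh_div_cosh]
  field_simp [(cosh_pos r).ne', (cosh_pos s).ne']

theorem stmt_5_general (r s Ψ ε ε' Φ Φ' : ℝ)
    (hε : 0 < ε)
    (hcos : Real.cosh ε = Real.cosh r * Real.cosh s - Real.sinh r * Real.sinh s * cos Ψ)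
    (hΦ : Φ ∈ Set.Ioo 0 (π / 2))
    (hsin : sin Φ = Real.sinh s * sin Ψ / Real.sinh ε)
    (hε' : 0 < ε')
    (hcos' : ε' ^ 2 = Real.tanh r ^ 2 + Real.tanh s ^ 2
      - 2 * Real.tanh r * Real.tanh s * cos Ψ)
    (hΦ' : Φ' ∈ Set.Ioo 0 (π / 2))
    (hsin' : sin Φ' = Real.tanh s * sin Ψ / ε') :
    tan Φ' = tan Φ * Real.cosh r := by
  have hcos_pos {θ : ℝ} (hθ : θ ∈ Set.Ioo 0 (π / 2)) : 0 < cos θ :=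
    cos_pos_of_mem_Ioo ⟨by linarith [pi_pos, hθ.1], hθ.2⟩
  have htan := tan_eq_div_abs_of_sin_eq_div (hcos_pos hΦ) (sinh_pos_iff.2 hε) hsin
    (sinh_sq_of_cosh_eq_hyperbolic_law_of_cosines hcos)
  have htan' := tan_eq_div_abs_of_sin_eq_div (hcos_pos hΦ') hε' hsin'
    (sq_eq_of_law_of_cosines hcos')
  rw [htan, htan', sinh_mul_cosh_sub_eq_tanh_sub_mul, abs_mul,
    abs_of_pos (mul_pos (cosh_pos r) (cosh_pos s)), tanh_eq_sinh_div_cosh]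
  field_simp

/-- Comparison of a hyperbolic triangle with sides `r`, `s` enclosing angle `Ψ` and the
Euclidean triangle in the Beltrami–Klein model with sides `tanh r`, `tanh s` enclosing
the same angle `Ψ`: the angles `Φ`, `Φ'` opposite the side `s` satisfy
`tan Φ' = tan Φ · cosh r`. -/
theorem stmt_5 (r s Ψ ε ε' Φ Φ' : ℝ)
    (hr : 0 < r) (hs : 0 < s) (hΨ : Ψ ∈ Set.Ioo 0 π)
    (hε : 0 < ε)
    (hcos : Real.cosh ε = Real.cosh r * Real.cosh s - Real.sinh r * Real.sinh s * cos Ψ)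
    (hΦ : Φ ∈ Set.Ioo 0 (π / 2))
    (hsin : sin Φ = Real.sinh s * sin Ψ / Real.sinh ε)
    (hε' : 0 < ε')
    (hcos' : ε' ^ 2 = Real.tanh r ^ 2 + Real.tanh s ^ 2
      - 2 * Real.tanh r * Real.tanh s * cos Ψ)
    (hΦ' : Φ' ∈ Set.Ioo 0 (π / 2))
    (hsin' : sin Φ' = Real.tanh s * sin Ψ / ε') :
    tan Φ' = tan Φ * Real.cosh r :=
  stmt_5_general r s Ψ ε ε' Φ Φ' hε hcos hΦ hsin hε' hcos' hΦ' hsin'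
end

section
/- Let S ⊆ ℝ² be a compact set with nonempty interior that is the intersection of two closed convex sets and whose boundary has exactly two non-smooth points p ≠ q (points where the boundary has two distinct supporting lines). If χ is a nontrivial isometry of ℝ² mapping S onto itself, then χ({p, q}) = {p, q}, and χ is one of: the point reflection through the midpoint of [p, q], the reflection across the line through p and q, or the reflection across the perpendicular bisector of [p, q]. -/
open RealInnerProductSpace

/-- A point `p` is a non-smooth boundary point of `S` if `S` has two distinct
supporting directions at `p`. -/
def NonSmoothPt (S : Set (EuclideanSpace ℝ (Fin 2))) (p : EuclideanSpace ℝ (Fin 2)) :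
    Prop :=
  p ∈ frontier S ∧ ∃ u v : EuclideanSpace ℝ (Fin 2), u ≠ v ∧ ‖u‖ = 1 ∧ ‖v‖ = 1 ∧
    (∀ y ∈ S, ⟪y, u⟫ ≤ ⟪p, u⟫) ∧ (∀ y ∈ S, ⟪y, v⟫ ≤ ⟪p, v⟫)

/-! An isometry of `S` permutes its non-smooth points, so `χ` fixes or swaps `p` and `q`.
Its linear part then sends `q - p` to `±(q - p)`, hence, being orthogonal in the plane, sends
a normal vector `w` of `q - p` to `±w`. The four sign choices give the identity (excluded), the
reflection in the line `pq`, the reflection in the perpendicular bisector, and the point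
reflection through the midpoint. -/

open Module Submodule

section Plane

variable {V : Type*} [NormedAddCommGroup V] [InnerProductSpace ℝ V] [Fact (finrank ℝ V = 2)]

theorem exists_ne_zero_inner_eq_zero (u : V) : ∃ w : V, w ≠ 0 ∧ ⟪u, w⟫ = 0 := by
  have : FiniteDimensional ℝ V := .of_fact_finrank_eq_succ 1
  have hdim := (ℝ ∙ u).finrank_add_finrank_orthogonal
  have hle : finrank ℝ (ℝ ∙ u) ≤ 1 := by simpa using finrank_span_le_card ({u} : Set V)
  have hne : (ℝ ∙ u)ᗮ ≠ ⊥ := by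
    intro h
    rw [h, finrank_bot, Fact.out (p := finrank ℝ V = 2)] at hdim
    omega
  obtain ⟨w, hw, hw0⟩ := (ℝ ∙ u)ᗮ.exists_mem_ne_zero_of_ne_bot hne
  exact ⟨w, hw0, mem_orthogonal_singleton_iff_inner_right.mp hw⟩

theorem span_pair_eq_top_of_inner_eq_zero {u w : V} (hu : u ≠ 0) (hw : w ≠ 0)
    (huw : ⟪u, w⟫ = 0) : span ℝ {u, w} = ⊤ := by
  have : FiniteDimensional ℝ V := .of_fact_finrank_eq_succ 1
  have hperp : (ℝ ∙ u)ᗮ = ℝ ∙ w :=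
    eq_span_singleton_of_mem_of_finrank_eq_one (finrank_orthogonal_span_singleton (n := 1) hu)
      (mem_orthogonal_singleton_iff_inner_right.mpr huw) hw
  rw [span_insert, ← hperp, sup_orthogonal_of_hasOrthogonalProjection]

theorem LinearIsometryEquiv.apply_eq_or_eq_neg_of_inner_eq_zero (L : V ≃ₗᵢ[ℝ] V) {u w : V}
    (hu : u ≠ 0) (hw : w ≠ 0) (huw : ⟪u, w⟫ = 0) (hLu : L u = u ∨ L u = -u) :
    L w = w ∨ L w = -w := by
  have hLw_perp : ⟪u, L w⟫ = 0 := by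
    have h := L.inner_map_map u w
    rcases hLu with h' | h' <;> simpa [h', huw] using h
  obtain ⟨c, hc⟩ := mem_span_singleton.mp
    (mem_span_singleton_of_inner_eq_zero_of_inner_eq_zero hu hw hLw_perp huw)
  have hc1 : |c| = 1 := by
    have h := L.norm_map w
    rw [← hc, norm_smul, Real.norm_eq_abs] at h
    exact (mul_eq_right₀ (norm_ne_zero_iff.mpr hw)).mp h
  rcases abs_eq (zero_le_one' ℝ) |>.mp hc1 with rfl | rfl
  · exact Or.inl (by simpa using hc.symm)
  · exact Or.inr (by simpa using hc.symm)

theorem LinearMap.involutive_of_inner_eq_zero (f : V →ₗ[ℝ] V) {u w : V}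
    (hu : u ≠ 0) (hw : w ≠ 0) (huw : ⟪u, w⟫ = 0) (hfu : f u = u ∨ f u = -u)
    (hfw : f w = w ∨ f w = -w) : Function.Involutive f := by
  have hsq : ∀ v, f v = v ∨ f v = -v → f (f v) = v := by
    rintro v (h | h) <;> simp [h]
  have h := LinearMap.ext_on (span_pair_eq_top_of_inner_eq_zero hu hw huw)
    (f := f ∘ₗ f) (g := LinearMap.id) (by
      rintro v (rfl | rfl)
      exacts [hsq _ hfu, hsq _ hfw])
  exact LinearMap.congr_fun h

theorem LinearMap.eq_smul_id_of_inner_eq_zero (f : V →ₗ[ℝ] V) {u w : V}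
    (hu : u ≠ 0) (hw : w ≠ 0) (huw : ⟪u, w⟫ = 0) (c : ℝ) (hfu : f u = c • u)
    (hfw : f w = c • w) (x : V) : f x = c • x := by
  have h := LinearMap.ext_on (span_pair_eq_top_of_inner_eq_zero hu hw huw)
    (f := f) (g := c • LinearMap.id) (by
      rintro v (rfl | rfl)
      exacts [hfu, hfw])
  exact LinearMap.congr_fun h x

end Plane

section Isometry

variable {E : Type*} [NormedAddCommGroup E] [NormedSpace ℝ E]

theorem IsometryEquiv.apply_add (χ : E ≃ᵢ E) (x v : E) :
    χ (x + v) = χ x + χ.toRealLinearIsometryEquiv v := by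
  have hA := χ.toRealAffineIsometryEquiv.map_vadd
  have h0 := hA 0 v
  have hx := hA x v
  simp only [vadd_eq_add, add_zero, IsometryEquiv.coeFn_toRealAffineIsometryEquiv] at h0 hx
  rw [add_comm x, hx, IsometryEquiv.toRealLinearIsometryEquiv_apply, h0, add_sub_cancel_right,
    add_comm]

theorem IsometryEquiv.involutive_of_apply_eq_self (χ : E ≃ᵢ E) {x₀ : E} (hx₀ : χ x₀ = x₀)
    (hL : Function.Involutive χ.toRealLinearIsometryEquiv) : Function.Involutive χ := by
  intro x
  have hχ : ∀ v, χ (x₀ + v) = x₀ + χ.toRealLinearIsometryEquiv v := fun v => by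
    rw [χ.apply_add, hx₀]
  calc χ (χ x) = χ (χ (x₀ + (x - x₀))) := by rw [add_sub_cancel]
    _ = x := by rw [hχ, hχ, hL, add_sub_cancel]

end Isometry

section PlaneIsometry

variable {V : Type*} [NormedAddCommGroup V] [InnerProductSpace ℝ V] [Fact (finrank ℝ V = 2)]

theorem IsometryEquiv.involutive_and_fixes_line_of_fixes_pair (χ : V ≃ᵢ V) {p q : V} (hpq : p ≠ q)
    (hp : χ p = p) (hq : χ q = q) (hχ : χ ≠ IsometryEquiv.refl V) :
    Function.Involutive χ ∧ ∀ t : ℝ, χ (p + t • (q - p)) = p + t • (q - p) := by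
  set L := χ.toRealLinearIsometryEquiv
  have hu : q - p ≠ 0 := sub_ne_zero.mpr hpq.symm
  have hLu : L (q - p) = q - p := by
    have h := χ.apply_add p (q - p)
    rw [add_sub_cancel, hp, hq] at h
    exact eq_sub_iff_add_eq'.mpr h.symm
  have hline : ∀ t : ℝ, χ (p + t • (q - p)) = p + t • (q - p) := fun t => by
    rw [χ.apply_add, map_smul, hLu, hp]
  obtain ⟨w, hw, huw⟩ := exists_ne_zero_inner_eq_zero (q - p)
  rcases L.apply_eq_or_eq_neg_of_inner_eq_zero hu hw huw (Or.inl hLu) with hLw | hLw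
  · refine absurd (IsometryEquiv.ext fun x => ?_) hχ
    have hLx : L (x - p) = x - p := by
      simpa using L.toLinearMap.eq_smul_id_of_inner_eq_zero hu hw huw 1 (by simpa using hLu)
        (by simpa using hLw) (x - p)
    calc χ x = χ (p + (x - p)) := by rw [add_sub_cancel]
      _ = x := by rw [χ.apply_add, hp, hLx, add_sub_cancel]
  · exact ⟨χ.involutive_of_apply_eq_self hp
      (L.toLinearMap.involutive_of_inner_eq_zero hu hw huw (Or.inl hLu) (Or.inr hLw)), hline⟩

theorem IsometryEquiv.pointReflection_or_bisectorReflection_of_swap (χ : V ≃ᵢ V) {p q : V}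
    (hpq : p ≠ q) (hp : χ p = q) (hq : χ q = p) :
    (∀ x, χ x = (2 : ℝ) • midpoint ℝ p q - x) ∨
      (Function.Involutive χ ∧ ∃ w : V, w ≠ 0 ∧ ⟪w, q - p⟫ = 0 ∧
        ∀ t : ℝ, χ (midpoint ℝ p q + t • w) = midpoint ℝ p q + t • w) := by
  set L := χ.toRealLinearIsometryEquiv
  set m := midpoint ℝ p q
  have hu : q - p ≠ 0 := sub_ne_zero.mpr hpq.symm
  have hLu : L (q - p) = -(q - p) := by
    have h := χ.apply_add p (q - p)
    rw [add_sub_cancel, hp, hq] at h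
    rw [eq_sub_iff_add_eq'.mpr h.symm, neg_sub]
  have hm : χ m = m := by rw [χ.map_midpoint, hp, hq, midpoint_comm]
  have hχm : ∀ v, χ (m + v) = m + L v := fun v => by rw [χ.apply_add, hm]
  obtain ⟨w, hw, huw⟩ := exists_ne_zero_inner_eq_zero (q - p)
  rcases L.apply_eq_or_eq_neg_of_inner_eq_zero hu hw huw (Or.inr hLu) with hLw | hLw
  · refine Or.inr ⟨χ.involutive_of_apply_eq_self hm
      (L.toLinearMap.involutive_of_inner_eq_zero hu hw huw (Or.inr hLu) (Or.inl hLw)),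
      w, hw, real_inner_comm w (q - p) ▸ huw, fun t => by rw [hχm, map_smul, hLw]⟩
  · refine Or.inl fun x => ?_
    have hLx : L (x - m) = -(x - m) := by
      simpa using L.toLinearMap.eq_smul_id_of_inner_eq_zero hu hw huw (-1) (by simpa using hLu)
        (by simpa using hLw) (x - m)
    calc χ x = χ (m + (x - m)) := by rw [add_sub_cancel]
      _ = (2 : ℝ) • m - x := by rw [hχm, hLx, two_smul]; abel

end PlaneIsometry

theorem NonSmoothPt.map_isometryEquiv {S : Set (EuclideanSpace ℝ (Fin 2))}
    {x : EuclideanSpace ℝ (Fin 2)} (χ : EuclideanSpace ℝ (Fin 2) ≃ᵢ EuclideanSpace ℝ (Fin 2))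
    (hχS : χ '' S = S) (hx : NonSmoothPt S x) : NonSmoothPt S (χ x) := by
  obtain ⟨hxS, u, v, huv, hu, hv, hSu, hSv⟩ := hx
  set L := χ.toRealLinearIsometryEquiv
  have hsupport : ∀ n, (∀ y ∈ S, ⟪y, n⟫ ≤ ⟪x, n⟫) → ∀ y ∈ S, ⟪y, L n⟫ ≤ ⟪χ x, L n⟫ := by
    intro n hn y hy
    obtain ⟨z, hz, rfl⟩ : y ∈ χ '' S := by rwa [hχS]
    calc ⟪χ z, L n⟫ = ⟪χ x + L (z - x), L n⟫ := by rw [← χ.apply_add, add_sub_cancel]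
      _ = ⟪χ x, L n⟫ + (⟪z, n⟫ - ⟪x, n⟫) := by
        rw [inner_add_left, L.inner_map_map, inner_sub_left]
      _ ≤ ⟪χ x, L n⟫ := by linarith [hn z hz]
  refine ⟨?_, L u, L v, L.injective.ne huv, by simpa using hu, by simpa using hv,
    hsupport u hSu, hsupport v hSv⟩
  have hfrontier : χ '' frontier S = frontier S := by
    simpa [hχS] using χ.toHomeomorph.image_frontier S
  exact hfrontier ▸ Set.mem_image_of_mem χ hxS

open scoped EuclideanSpace

theorem stmt_17_general (S : Set (EuclideanSpace ℝ (Fin 2)))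
    (p q : EuclideanSpace ℝ (Fin 2)) (hpq : p ≠ q)
    (hns : {x | NonSmoothPt S x} = {p, q})
    (χ : EuclideanSpace ℝ (Fin 2) ≃ᵢ EuclideanSpace ℝ (Fin 2))
    (hχS : χ '' S = S) (hχne : χ ≠ IsometryEquiv.refl _) :
    χ '' {p, q} = {p, q} ∧
    ((∀ x, χ x = (2 : ℝ) • midpoint ℝ p q - x) ∨
      ((∀ x, χ (χ x) = x) ∧ ∀ t : ℝ, χ (p + t • (q - p)) = p + t • (q - p)) ∨
      ((∀ x, χ (χ x) = x) ∧ ∃ w : EuclideanSpace ℝ (Fin 2), w ≠ 0 ∧ ⟪w, q - p⟫ = 0 ∧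
        ∀ t : ℝ, χ (midpoint ℝ p q + t • w) = midpoint ℝ p q + t • w)) := by
  have hmaps : ∀ x ∈ ({p, q} : Set _), χ x ∈ ({p, q} : Set _) := by
    rw [← hns]
    exact fun x hx => hx.map_isometryEquiv χ hχS
  have hp := hmaps p (by simp)
  have hq := hmaps q (by simp)
  simp only [Set.mem_insert_iff, Set.mem_singleton_iff] at hp hq
  rcases hp with hp | hp <;> rcases hq with hq | hq
  · exact absurd (χ.injective (hp.trans hq.symm)) hpq
  · refine ⟨by rw [Set.image_pair, hp, hq], Or.inr (Or.inl ?_)⟩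
    exact χ.involutive_and_fixes_line_of_fixes_pair hpq hp hq hχne
  · refine ⟨by rw [Set.image_pair, hp, hq, Set.pair_comm], ?_⟩
    rcases χ.pointReflection_or_bisectorReflection_of_swap hpq hp hq with h | h
    exacts [Or.inl h, Or.inr (Or.inr h)]
  · exact absurd (χ.injective (hp.trans hq.symm)) hpq

/-- A nontrivial self-isometry of a compact planar set with nonempty interior, equal to
an intersection of two closed convex sets and with exactly two non-smooth boundary
points `p ≠ q`, preserves `{p, q}`, and it is the point reflection through the midpoint
of `[p, q]`, or the reflection across the line `pq`, or the reflection across the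
perpendicular bisector of `[p, q]`. -/
theorem stmt_17 (S C₁ C₂ : Set (EuclideanSpace ℝ (Fin 2)))
    (hSc : IsCompact S) (hSint : (interior S).Nonempty)
    (hC₁ : IsClosed C₁) (hC₁conv : Convex ℝ C₁)
    (hC₂ : IsClosed C₂) (hC₂conv : Convex ℝ C₂)
    (hS : S = C₁ ∩ C₂)
    (p q : EuclideanSpace ℝ (Fin 2)) (hpq : p ≠ q)
    (hns : {x | NonSmoothPt S x} = {p, q})
    (χ : EuclideanSpace ℝ (Fin 2) ≃ᵢ EuclideanSpace ℝ (Fin 2))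
    (hχS : χ '' S = S) (hχne : χ ≠ IsometryEquiv.refl _) :
    χ '' {p, q} = {p, q} ∧
    ((∀ x, χ x = (2 : ℝ) • midpoint ℝ p q - x) ∨
      ((∀ x, χ (χ x) = x) ∧ ∀ t : ℝ, χ (p + t • (q - p)) = p + t • (q - p)) ∨
      ((∀ x, χ (χ x) = x) ∧ ∃ w : EuclideanSpace ℝ (Fin 2), w ≠ 0 ∧ ⟪w, q - p⟫ = 0 ∧
        ∀ t : ℝ, χ (midpoint ℝ p q + t • w) = midpoint ℝ p q + t • w)) :=
  stmt_17_general S p q hpq hns χ hχS hχne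
end
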